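/- Suppose 0 < α < 1, b is an even positive integer, b^{1−α} > 2, and β > α. Then for every x ∈ ℝ, limsup_{y→x} |Φ(x) − Φ(y)|/|x − y|^β = ∞. -/
import Mathlib


open Set Filter Topology

/-- The sawtooth function `φ(x) = dist(x, 2ℤ)`. -/
noncomputable def sawtooth (x : ℝ) : ℝ :=
  Metric.infDist x {y : ℝ | ∃ m : ℤ, y = 2 * m}

lemma sawtooth_nonneg (x : ℝ) : 0 ≤ sawtooth x := Metric.infDist_nonneg

lemma sawtooth_le_one (x : ℝ) : sawtooth x ≤ 1 := by
  have hmem : (2 * (round (x/2) : ℤ) : ℝ) ∈ {y : ℝ | ∃ m : ℤ, y = 2 * m} := ⟨_, by push_cast; ring⟩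
  refine le_trans (Metric.infDist_le_dist_of_mem hmem) ?_
  rw [Real.dist_eq]
  have h := abs_sub_round (x/2)
  have e : x - (2 * (round (x/2) : ℤ) : ℝ) = 2 * (x/2 - (round (x/2) : ℤ)) := by push_cast; ring
  rw [e, abs_mul, abs_two]
  nlinarith [h]

lemma sawtooth_lip (u v : ℝ) : |sawtooth u - sawtooth v| ≤ |u - v| := by
  rw [abs_sub_le_iff]
  have h1 := Metric.infDist_le_infDist_add_dist
    (x := u) (y := v) (s := {y : ℝ | ∃ m : ℤ, y = 2 * m})
  have h2 := Metric.infDist_le_infDist_add_dist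
    (x := v) (y := u) (s := {y : ℝ | ∃ m : ℤ, y = 2 * m})
  rw [Real.dist_eq] at h1 h2
  rw [abs_sub_comm] at h2
  constructor <;> [skip; skip] <;> unfold sawtooth <;> linarith

lemma sawtooth_int_even (j : ℤ) (h : Even j) : sawtooth (j : ℝ) = 0 := by
  obtain ⟨c, rfl⟩ := h
  exact Metric.infDist_zero_of_mem ⟨c, by push_cast; ring⟩

lemma sawtooth_int_odd (j : ℤ) (h : Odd j) : sawtooth (j : ℝ) = 1 := by
  obtain ⟨c, rfl⟩ := h
  refine le_antisymm ?_ ?_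
  · refine le_trans (Metric.infDist_le_dist_of_mem (y := (2*(c:ℝ))) ⟨c, rfl⟩) ?_
    rw [Real.dist_eq]
    push_cast
    simp [abs_of_nonneg]
  · have hne : Set.Nonempty {y : ℝ | ∃ m : ℤ, y = 2 * m} := ⟨0, 0, by norm_num⟩
    rw [sawtooth, ← not_lt, Metric.infDist_lt_iff hne]
    rintro ⟨y, ⟨m, rfl⟩, hy⟩
    rw [Real.dist_eq] at hy
    refine absurd hy (not_lt.2 ?_)
    have : ((2*c+1 : ℤ) : ℝ) - 2*(m:ℝ) = ((2*(c-m)+1 : ℤ) : ℝ) := by push_cast; ring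
    rw [this, ← Int.cast_abs]
    have : (1:ℤ) ≤ |2*(c-m)+1| := Int.one_le_abs (by omega)
    exact_mod_cast this

/-- Katzourakis' function `Φ(x) = Σ_{k=0}^∞ b^{-kα} φ(b^k x)`. -/
noncomputable def Phi (b : ℕ) (α : ℝ) (x : ℝ) : ℝ :=
  ∑' k : ℕ, (b : ℝ) ^ (-((k : ℝ) * α)) * sawtooth ((b : ℝ) ^ k * x)

lemma phi_summable {b : ℕ} (hb1 : 1 < (b:ℝ)) {α : ℝ} (hα0 : 0 < α) (y : ℝ) :
    Summable (fun k : ℕ => (b : ℝ) ^ (-((k : ℝ) * α)) * sawtooth ((b : ℝ) ^ k * y)) := by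
  have hb0 : (0:ℝ) < b := lt_trans one_pos hb1
  have hr1 : (b:ℝ) ^ (-α) < 1 :=
    Real.rpow_lt_one_of_one_lt_of_neg hb1 (by linarith)
  have hr0 : 0 ≤ (b:ℝ) ^ (-α) := Real.rpow_nonneg hb0.le _
  refine Summable.of_nonneg_of_le
    (fun k => mul_nonneg (Real.rpow_nonneg hb0.le _) (sawtooth_nonneg _))
    (fun k => ?_) (summable_geometric_of_lt_one hr0 hr1)
  calc (b : ℝ) ^ (-((k : ℝ) * α)) * sawtooth ((b : ℝ) ^ k * y)
      ≤ (b : ℝ) ^ (-((k : ℝ) * α)) * 1 :=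
        mul_le_mul_of_nonneg_left (sawtooth_le_one _) (Real.rpow_nonneg hb0.le _)
    _ = ((b:ℝ) ^ (-α)) ^ k := by
        rw [mul_one, ← Real.rpow_natCast ((b:ℝ) ^ (-α)) k, ← Real.rpow_mul hb0.le]
        congr 1; ring

lemma phi_grid {b : ℕ} (hb1 : 1 < (b:ℝ)) (hbe : Even b) {α : ℝ} (hα0 : 0 < α)
    (n : ℕ) (m : ℤ) :
    Phi b α ((m:ℝ) / (b:ℝ)^n) =
      (∑ k ∈ Finset.range n,
        (b : ℝ) ^ (-((k : ℝ) * α)) * sawtooth ((b : ℝ) ^ k * ((m:ℝ) / (b:ℝ)^n)))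
      + (b : ℝ) ^ (-((n : ℝ) * α)) * sawtooth (m:ℝ) := by
  have hb0 : (0:ℝ) < b := lt_trans one_pos hb1
  have hBn : (0:ℝ) < (b:ℝ)^n := pow_pos hb0 n
  rw [Phi, ← Summable.sum_add_tsum_nat_add n (phi_summable hb1 hα0 _)]
  congr 1
  have harg : ∀ i : ℕ, (b : ℝ) ^ (i + n) * ((m:ℝ) / (b:ℝ)^n) = (b:ℝ)^i * (m:ℝ) := by
    intro i
    field_simp [pow_add]
    ring
  rw [tsum_eq_single 0 ?_]
  · have h0 : (b:ℝ)^n * ((m:ℝ)/(b:ℝ)^n) = (m:ℝ) := by field_simp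
    simp only [h0, Nat.cast_add, Nat.cast_zero, zero_add]
  · intro i hi
    rw [harg i]
    have hcast : (b:ℝ)^i * (m:ℝ) = (((b:ℤ)^i * m : ℤ) : ℝ) := by push_cast; ring
    have heven : Even ((b:ℤ)^i * m) := by
      have : Even ((b:ℤ)^i) := ((Int.even_coe_nat b).2 hbe).pow_of_ne_zero hi
      exact this.mul_right m
    rw [hcast, sawtooth_int_even _ heven, mul_zero]

lemma phi_key {α : ℝ} (hα0 : 0 < α) {b : ℕ} (hbe : Even b) (hb1 : 1 < (b:ℝ))
    (hb2 : 2 < (b : ℝ) ^ (1 - α)) (x : ℝ) (n : ℕ) :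
    ∃ y : ℝ, |x - y| ≤ ((b:ℝ)^n)⁻¹ ∧
      (1 - 1/((b:ℝ)^(1-α) - 1)) / 2 * (b:ℝ) ^ (-((n:ℝ)*α)) ≤ |Phi b α x - Phi b α y| := by
  have hb0 : (0:ℝ) < b := lt_trans one_pos hb1
  set B : ℝ := (b:ℝ) with hB
  have hBn : (0:ℝ) < B ^ n := pow_pos hb0 n
  set ρ : ℝ := B ^ (1-α) with hρdef
  have hρ : 2 < ρ := hb2
  set f : ℝ → ℕ → ℝ := fun y k => B ^ (-((k : ℝ) * α)) * sawtooth (B ^ k * y) with hf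
  set m0 : ℤ := ⌊B ^ n * x⌋ with hm0
  set y0 : ℝ := (m0 : ℝ) / B ^ n with hy0
  set y1 : ℝ := ((m0 + 1 : ℤ) : ℝ) / B ^ n with hy1
  have hxy0 : 0 ≤ x - y0 := by
    rw [hy0, sub_nonneg, div_le_iff₀ hBn]
    rw [mul_comm]
    exact Int.floor_le _
  have hxy1 : 0 ≤ y1 - x := by
    rw [hy1, sub_nonneg, le_div_iff₀ hBn]
    push_cast
    rw [mul_comm]
    exact (Int.lt_floor_add_one _).le
  have hdsum : (x - y0) + (y1 - x) = (B ^ n)⁻¹ := by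
    rw [hy0, hy1]
    push_cast
    field_simp
    ring
  -- conversion lemma
  have conv1 : ∀ k : ℕ, B ^ (-((k:ℝ)*α)) * B ^ k = ρ ^ k := by
    intro k
    rw [hρdef, ← Real.rpow_natCast B k, ← Real.rpow_add hb0,
      ← Real.rpow_natCast (B ^ (1-α)) k, ← Real.rpow_mul hb0.le]
    congr 1; ring
  -- head bound
  have hhead : ∀ y : ℝ, |∑ k ∈ Finset.range n, (f x k - f y k)|
      ≤ (∑ k ∈ Finset.range n, ρ ^ k) * |x - y| := by
    intro y
    refine le_trans (Finset.abs_sum_le_sum_abs _ _) ?_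
    rw [Finset.sum_mul]
    refine Finset.sum_le_sum fun k _ => ?_
    have hcoef : 0 ≤ B ^ (-((k:ℝ)*α)) := Real.rpow_nonneg hb0.le _
    calc |f x k - f y k| = B ^ (-((k:ℝ)*α)) * |sawtooth (B ^ k * x) - sawtooth (B ^ k * y)| := by
          rw [hf]; simp only [← mul_sub, abs_mul, abs_of_nonneg hcoef]
      _ ≤ B ^ (-((k:ℝ)*α)) * |B ^ k * x - B ^ k * y| :=
          mul_le_mul_of_nonneg_left (sawtooth_lip _ _) hcoef
      _ = B ^ (-((k:ℝ)*α)) * B ^ k * |x - y| := by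
          rw [← mul_sub, abs_mul, abs_of_nonneg (pow_pos hb0 k).le, mul_assoc]
      _ = ρ ^ k * |x - y| := by rw [conv1]
  have hG0 : 0 ≤ ∑ k ∈ Finset.range n, ρ ^ k :=
    Finset.sum_nonneg fun k _ => pow_nonneg (by linarith) k
  have hgeom : (∑ k ∈ Finset.range n, ρ ^ k) ≤ ρ ^ n / (ρ - 1) := by
    have h := geom_sum_mul ρ n
    rw [le_div_iff₀ (by linarith)]
    linarith [pow_nonneg (show (0:ℝ) ≤ ρ by linarith) n]
  have conv2 : ρ ^ n * (B ^ n)⁻¹ = B ^ (-((n:ℝ)*α)) := by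
    rw [hρdef, ← Real.rpow_natCast (B ^ (1-α)) n, ← Real.rpow_mul hb0.le,
      ← Real.rpow_natCast B n, ← Real.rpow_neg hb0.le, ← Real.rpow_add hb0]
    congr 1; ring
  have hdx : Phi b α x = (∑ k ∈ Finset.range n, f x k) + ∑' i, f x (i + n) := by
    simp only [Phi, hf]
    rw [← Summable.sum_add_tsum_nat_add n (phi_summable hb1 hα0 x)]
  have hdy0 : Phi b α y0 = (∑ k ∈ Finset.range n, f y0 k)
      + B ^ (-((n:ℝ)*α)) * sawtooth ((m0 : ℤ) : ℝ) := by
    have h := phi_grid hb1 hbe hα0 n m0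
    rw [← hy0] at h
    exact h
  have hdy1 : Phi b α y1 = (∑ k ∈ Finset.range n, f y1 k)
      + B ^ (-((n:ℝ)*α)) * sawtooth ((m0 + 1 : ℤ) : ℝ) := by
    have h := phi_grid hb1 hbe hα0 n (m0 + 1)
    rw [← hy1] at h
    exact h
  set T : ℝ := ∑' i, f x (i + n) with hT
  set c : ℝ := B ^ (-((n:ℝ)*α)) with hc
  have hc0 : 0 < c := Real.rpow_pos_of_pos hb0 _
  set S0 : ℝ := ∑ k ∈ Finset.range n, (f x k - f y0 k) with hS0
  set S1 : ℝ := ∑ k ∈ Finset.range n, (f x k - f y1 k) with hS1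
  have hD0 : Phi b α x - Phi b α y0 = S0 + T - c * sawtooth ((m0 : ℤ) : ℝ) := by
    rw [hdx, hdy0, hS0, Finset.sum_sub_distrib]; ring
  have hD1 : Phi b α x - Phi b α y1 = S1 + T - c * sawtooth ((m0 + 1 : ℤ) : ℝ) := by
    rw [hdx, hdy1, hS1, Finset.sum_sub_distrib]; ring
  have hsaw : |sawtooth ((m0 : ℤ) : ℝ) - sawtooth ((m0 + 1 : ℤ) : ℝ)| = 1 := by
    rcases Int.even_or_odd m0 with h | h
    · rw [sawtooth_int_even _ h, sawtooth_int_odd _ (Even.add_one h)]; norm_num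
    · rw [sawtooth_int_odd _ h, sawtooth_int_even _ (Odd.add_one h)]; norm_num
  have hS : |S0| + |S1| ≤ (1/(ρ-1)) * c := by
    have h0 := hhead y0
    have h1 := hhead y1
    rw [abs_of_nonneg hxy0] at h0
    rw [abs_sub_comm, abs_of_nonneg hxy1] at h1
    calc |S0| + |S1| ≤ (∑ k ∈ Finset.range n, ρ ^ k) * ((x - y0) + (y1 - x)) := by
          rw [mul_add]; exact add_le_add h0 h1
      _ = (∑ k ∈ Finset.range n, ρ ^ k) * (B ^ n)⁻¹ := by rw [hdsum]
      _ ≤ (ρ ^ n / (ρ - 1)) * (B ^ n)⁻¹ :=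
          mul_le_mul_of_nonneg_right hgeom (inv_nonneg.2 hBn.le)
      _ = (1/(ρ-1)) * c := by rw [← conv2]; ring
  have hdiff : (Phi b α x - Phi b α y0) - (Phi b α x - Phi b α y1)
      = (S0 - S1) - c * (sawtooth ((m0 : ℤ) : ℝ) - sawtooth ((m0 + 1 : ℤ) : ℝ)) := by
    rw [hD0, hD1]; ring
  have habs1 : c - (|S0| + |S1|)
      ≤ |(Phi b α x - Phi b α y0) - (Phi b α x - Phi b α y1)| := by
    rw [hdiff]
    have h2 : |c * (sawtooth ((m0 : ℤ) : ℝ) - sawtooth ((m0 + 1 : ℤ) : ℝ))| = c := by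
      rw [abs_mul, abs_of_pos hc0, hsaw, mul_one]
    have h3 : |S0 - S1| ≤ |S0| + |S1| := abs_sub _ _
    have h4 := abs_sub_abs_le_abs_sub
      (c * (sawtooth ((m0 : ℤ) : ℝ) - sawtooth ((m0 + 1 : ℤ) : ℝ))) (S0 - S1)
    have h5 : |c * (sawtooth ((m0 : ℤ) : ℝ) - sawtooth ((m0 + 1 : ℤ) : ℝ)) - (S0 - S1)|
        = |(S0 - S1) - c * (sawtooth ((m0 : ℤ) : ℝ) - sawtooth ((m0 + 1 : ℤ) : ℝ))| :=
      abs_sub_comm _ _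
    linarith
  have htri : |(Phi b α x - Phi b α y0) - (Phi b α x - Phi b α y1)|
      ≤ |Phi b α x - Phi b α y0| + |Phi b α x - Phi b α y1| := abs_sub _ _
  have hθ1 : 1/(ρ-1) < 1 := by
    rw [div_lt_one (by linarith)]; linarith
  rcases le_total |Phi b α x - Phi b α y0| |Phi b α x - Phi b α y1| with hle | hle
  · refine ⟨y1, ?_, ?_⟩
    · rw [abs_sub_comm, abs_of_nonneg hxy1]; linarith
    · linarith
  · refine ⟨y0, ?_, ?_⟩
    · rw [abs_of_nonneg hxy0]; linarith
    · linarith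

/-- If `0 < α < 1`, `b` is an even positive integer with `b^{1-α} > 2`, and `β > α`, then
for every `x ∈ ℝ`, `limsup_{y→x} |Φ(x) - Φ(y)|/|x - y|^β = ∞`: the quotients are frequently
larger than any bound near `x`. -/
theorem phi_limsup_eq_top (α : ℝ) (hα0 : 0 < α) (hα1 : α < 1) (b : ℕ) (hb : 0 < b)
    (hbe : Even b) (hb2 : 2 < (b : ℝ) ^ (1 - α)) (β : ℝ) (hβ : α < β) (x : ℝ) :
    ∀ M : ℝ, ∃ᶠ y in 𝓝[≠] x, M < |Phi b α x - Phi b α y| / |x - y| ^ β := by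
  intro M
  have hb2' : 2 ≤ b := by
    obtain ⟨c, rfl⟩ := hbe; omega
  have hb1 : 1 < (b:ℝ) := by exact_mod_cast Nat.lt_of_lt_of_le one_lt_two hb2'
  have hb0 : (0:ℝ) < b := lt_trans one_pos hb1
  set ρ : ℝ := (b:ℝ) ^ (1-α) with hρdef
  set c : ℝ := (1 - 1/(ρ - 1)) / 2 with hcdef
  have hc0 : 0 < c := by
    have : 1/(ρ-1) < 1 := by rw [div_lt_one (by linarith)]; linarith
    rw [hcdef]; linarith
  rw [Filter.frequently_iff]
  intro U hU
  rw [Metric.mem_nhdsWithin_iff] at hU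
  obtain ⟨ε, hε, hsub⟩ := hU
  -- choose n
  have h1 : Tendsto (fun n : ℕ => ((b:ℝ)⁻¹) ^ n) atTop (𝓝 0) :=
    tendsto_pow_atTop_nhds_zero_of_lt_one (inv_nonneg.2 hb0.le)
      (inv_lt_one_of_one_lt₀ hb1)
  have hgt1 : 1 < (b:ℝ) ^ (β - α) :=
    Real.one_lt_rpow_iff_of_pos hb0 |>.2 (Or.inl ⟨hb1, by linarith⟩)
  have h2 : Tendsto (fun n : ℕ => ((b:ℝ) ^ (β - α)) ^ n) atTop atTop :=
    tendsto_pow_atTop_atTop_of_one_lt hgt1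
  obtain ⟨n, hn1, hn2⟩ :=
    ((h1.eventually (gt_mem_nhds hε)).and (h2.eventually_gt_atTop (M / c))).exists
  obtain ⟨y, hy1, hy2⟩ := phi_key hα0 hbe hb1 hb2 x n
  have hinv : ((b:ℝ) ^ n)⁻¹ = ((b:ℝ)⁻¹) ^ n := by rw [inv_pow]
  have hcn : (0:ℝ) < c * (b:ℝ) ^ (-((n:ℝ)*α)) :=
    mul_pos hc0 (Real.rpow_pos_of_pos hb0 _)
  have hD0 : 0 < |Phi b α x - Phi b α y| := lt_of_lt_of_le hcn hy2
  have hyx : y ≠ x := by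
    rintro rfl
    simp at hD0
  have hxyne : x ≠ y := fun h => hyx h.symm
  have hxypos : 0 < |x - y| := abs_pos.2 (sub_ne_zero.2 hxyne)
  refine ⟨y, hsub ⟨?_, hyx⟩, ?_⟩
  · rw [Metric.mem_ball, Real.dist_eq, abs_sub_comm]
    exact lt_of_le_of_lt (hy1.trans_eq hinv) hn1
  -- the quotient estimate
  have hβ0 : (0:ℝ) ≤ β := by linarith
  have h3 : |x - y| ^ β ≤ (((b:ℝ) ^ n)⁻¹) ^ β :=
    Real.rpow_le_rpow (abs_nonneg _) hy1 hβ0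
  have h4 : (0:ℝ) < |x - y| ^ β := Real.rpow_pos_of_pos hxypos β
  have hBninv : (0:ℝ) < (((b:ℝ) ^ n)⁻¹) ^ β :=
    Real.rpow_pos_of_pos (inv_pos.2 (pow_pos hb0 n)) β
  have heq : c * ((b:ℝ) ^ (β - α)) ^ n
      = (c * (b:ℝ) ^ (-((n:ℝ)*α))) / (((b:ℝ) ^ n)⁻¹) ^ β := by
    have e1 : (((b:ℝ) ^ n)⁻¹) ^ β = (b:ℝ) ^ (-((n:ℝ) * β)) := by
      rw [← Real.rpow_natCast (b:ℝ) n, ← Real.rpow_neg hb0.le, ← Real.rpow_mul hb0.le]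
      congr 1; ring
    have e2 : ((b:ℝ) ^ (β - α)) ^ n = (b:ℝ) ^ ((n:ℝ) * (β - α)) := by
      rw [← Real.rpow_natCast ((b:ℝ) ^ (β - α)) n, ← Real.rpow_mul hb0.le]
      congr 1; ring
    rw [e1, e2, mul_div_assoc, ← Real.rpow_sub hb0]
    congr 2
    ring
  have hMn : M < c * ((b:ℝ) ^ (β - α)) ^ n := by
    rw [div_lt_iff₀ hc0] at hn2
    rwa [mul_comm] at hn2
  calc M < c * ((b:ℝ) ^ (β - α)) ^ n := hMn
    _ = (c * (b:ℝ) ^ (-((n:ℝ)*α))) / (((b:ℝ) ^ n)⁻¹) ^ β := heq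
    _ ≤ |Phi b α x - Phi b α y| / |x - y| ^ β :=
        div_le_div₀ (abs_nonneg _) hy2 h4 h3
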